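/- arXiv:1707.01760 — 4 statements merged into one kernel-verified Lean document; each statement's English description precedes it below -/
import Mathlib

section
/- Let cos_T : ℝ → ℝ be the period-2 even piecewise linear function with cos_T x = 1 − 2|x| for x ∈ [−1,1]. Then for all real φ, ψ, the point (u, v, w) = (2cos_T φ, 2cos_T ψ, 2cos_T(φ+ψ)) satisfies max(−u−v−w, −u+v+w, u−v+w, u+v−w) = 2. -/
noncomputable def cosT (x : ℝ) : ℝ := 2 * |2 * Int.fract (x/2) - 1| - 1

theorem cosT_param_on_surface (φ ψ : ℝ) :
    max (-(2*cosT φ) - 2*cosT ψ - 2*cosT (φ+ψ))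
      (max (-(2*cosT φ) + 2*cosT ψ + 2*cosT (φ+ψ))
        (max (2*cosT φ - 2*cosT ψ + 2*cosT (φ+ψ))
          (2*cosT φ + 2*cosT ψ - 2*cosT (φ+ψ)))) = 2 := by
  set a := Int.fract (φ/2) with ha
  set b := Int.fract (ψ/2) with hb
  have h0a : 0 ≤ a := Int.fract_nonneg _
  have h1a : a < 1 := Int.fract_lt_one _
  have h0b : 0 ≤ b := Int.fract_nonneg _
  have h1b : b < 1 := Int.fract_lt_one _
  have key : Int.fract ((φ+ψ)/2) = Int.fract (a + b) := by
    have h : (φ+ψ)/2 = (a+b) + ((⌊φ/2⌋ + ⌊ψ/2⌋ : ℤ) : ℝ) := by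
      push_cast
      rw [ha, hb]
      unfold Int.fract
      ring
    rw [h, Int.fract_add_intCast]
  unfold cosT
  rw [key]
  rcases lt_or_ge (a + b) 1 with hab | hab
  · have hf : Int.fract (a + b) = a + b := Int.fract_eq_self.2 ⟨by linarith, hab⟩
    rw [hf]
    rcases abs_cases (2*a-1) with ⟨e1, s1⟩ | ⟨e1, s1⟩ <;>
    rcases abs_cases (2*b-1) with ⟨e2, s2⟩ | ⟨e2, s2⟩ <;>
    rcases abs_cases (2*(a+b)-1) with ⟨e3, s3⟩ | ⟨e3, s3⟩ <;>
    rw [e1, e2, e3] <;>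
    · apply le_antisymm
      · simp only [max_le_iff]
        refine ⟨by linarith, by linarith, by linarith, by linarith⟩
      · simp only [le_max_iff]
        first
        | exact Or.inl (by linarith)
        | exact Or.inr (Or.inl (by linarith))
        | exact Or.inr (Or.inr (Or.inl (by linarith)))
        | exact Or.inr (Or.inr (Or.inr (by linarith)))
  · have hf : Int.fract (a + b) = a + b - 1 := by
      rw [Int.fract_eq_iff]
      exact ⟨by linarith, by linarith, 1, by push_cast; ring⟩
    rw [hf]
    rcases abs_cases (2*a-1) with ⟨e1, s1⟩ | ⟨e1, s1⟩ <;>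
    rcases abs_cases (2*b-1) with ⟨e2, s2⟩ | ⟨e2, s2⟩ <;>
    rcases abs_cases (2*(a+b-1)-1) with ⟨e3, s3⟩ | ⟨e3, s3⟩ <;>
    rw [e1, e2, e3] <;>
    · apply le_antisymm
      · simp only [max_le_iff]
        refine ⟨by linarith, by linarith, by linarith, by linarith⟩
      · simp only [le_max_iff]
        first
        | exact Or.inl (by linarith)
        | exact Or.inr (Or.inl (by linarith))
        | exact Or.inr (Or.inr (Or.inl (by linarith)))
        | exact Or.inr (Or.inr (Or.inr (by linarith)))
end

section
/- For all real φ, ψ, the tropical Cayley–Markov involution applied to the point (2cos_T φ, 2cos_T ψ, 2cos_T(φ+ψ)) yields (2cos_T φ, 2cos_T ψ, 2cos_T(φ−ψ)); i.e. −2cos_T(φ+ψ) + 2f(2cos_T φ, 2cos_T ψ) = 2cos_T(φ−ψ). -/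
noncomputable def f (u v : ℝ) : ℝ :=
  if u ≥ |v| then v else if v ≥ |u| then u else if -u ≥ |v| then -v else -u

set_option maxHeartbeats 2000000 in
private lemma keyA (p q : ℝ) (hp1 : p < 1) (hq0 : 0 ≤ q)
    (hs : p + q < 1) (hd : q ≤ p) :
    -(2 * (2 * |2 * (p + q) - 1| - 1)) +
      2 * f (2 * (2 * |2 * p - 1| - 1)) (2 * (2 * |2 * q - 1| - 1)) =
      2 * (2 * |2 * (p - q) - 1| - 1) := by
  unfold f
  rcases abs_cases (2 * p - 1) with ⟨e1, f1⟩ | ⟨e1, f1⟩ <;>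
  rcases abs_cases (2 * q - 1) with ⟨e2, f2⟩ | ⟨e2, f2⟩ <;>
  rcases abs_cases (2 * (2 * |2 * p - 1| - 1)) with ⟨e3, f3⟩ | ⟨e3, f3⟩ <;>
  rcases abs_cases (2 * (2 * |2 * q - 1| - 1)) with ⟨e4, f4⟩ | ⟨e4, f4⟩ <;>
  rcases abs_cases (2 * (p + q) - 1) with ⟨e5, f5⟩ | ⟨e5, f5⟩ <;>
  rcases abs_cases (2 * (p - q) - 1) with ⟨e6, f6⟩ | ⟨e6, f6⟩ <;>
  split_ifs <;> linarith

set_option maxHeartbeats 2000000 in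
private lemma keyB (p q : ℝ) (hp1 : p < 1) (hq0 : 0 ≤ q)
    (hs : 1 ≤ p + q) (hd : q ≤ p) :
    -(2 * (2 * |2 * (p + q - 1) - 1| - 1)) +
      2 * f (2 * (2 * |2 * p - 1| - 1)) (2 * (2 * |2 * q - 1| - 1)) =
      2 * (2 * |2 * (p - q) - 1| - 1) := by
  unfold f
  rcases abs_cases (2 * p - 1) with ⟨e1, f1⟩ | ⟨e1, f1⟩ <;>
  rcases abs_cases (2 * q - 1) with ⟨e2, f2⟩ | ⟨e2, f2⟩ <;>
  rcases abs_cases (2 * (2 * |2 * p - 1| - 1)) with ⟨e3, f3⟩ | ⟨e3, f3⟩ <;>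
  rcases abs_cases (2 * (2 * |2 * q - 1| - 1)) with ⟨e4, f4⟩ | ⟨e4, f4⟩ <;>
  rcases abs_cases (2 * (p + q - 1) - 1) with ⟨e5, f5⟩ | ⟨e5, f5⟩ <;>
  rcases abs_cases (2 * (p - q) - 1) with ⟨e6, f6⟩ | ⟨e6, f6⟩ <;>
  split_ifs <;> linarith

set_option maxHeartbeats 2000000 in
private lemma keyC (p q : ℝ) (hp0 : 0 ≤ p) (hq1 : q < 1)
    (hs : p + q < 1) (hd : p < q) :
    -(2 * (2 * |2 * (p + q) - 1| - 1)) +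
      2 * f (2 * (2 * |2 * p - 1| - 1)) (2 * (2 * |2 * q - 1| - 1)) =
      2 * (2 * |2 * (p - q + 1) - 1| - 1) := by
  unfold f
  rcases abs_cases (2 * p - 1) with ⟨e1, f1⟩ | ⟨e1, f1⟩ <;>
  rcases abs_cases (2 * q - 1) with ⟨e2, f2⟩ | ⟨e2, f2⟩ <;>
  rcases abs_cases (2 * (2 * |2 * p - 1| - 1)) with ⟨e3, f3⟩ | ⟨e3, f3⟩ <;>
  rcases abs_cases (2 * (2 * |2 * q - 1| - 1)) with ⟨e4, f4⟩ | ⟨e4, f4⟩ <;>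
  rcases abs_cases (2 * (p + q) - 1) with ⟨e5, f5⟩ | ⟨e5, f5⟩ <;>
  rcases abs_cases (2 * (p - q + 1) - 1) with ⟨e6, f6⟩ | ⟨e6, f6⟩ <;>
  split_ifs <;> linarith

set_option maxHeartbeats 2000000 in
private lemma keyD (p q : ℝ) (hp0 : 0 ≤ p) (hq1 : q < 1)
    (hs : 1 ≤ p + q) (hd : p < q) :
    -(2 * (2 * |2 * (p + q - 1) - 1| - 1)) +
      2 * f (2 * (2 * |2 * p - 1| - 1)) (2 * (2 * |2 * q - 1| - 1)) =
      2 * (2 * |2 * (p - q + 1) - 1| - 1) := by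
  unfold f
  rcases abs_cases (2 * p - 1) with ⟨e1, f1⟩ | ⟨e1, f1⟩ <;>
  rcases abs_cases (2 * q - 1) with ⟨e2, f2⟩ | ⟨e2, f2⟩ <;>
  rcases abs_cases (2 * (2 * |2 * p - 1| - 1)) with ⟨e3, f3⟩ | ⟨e3, f3⟩ <;>
  rcases abs_cases (2 * (2 * |2 * q - 1| - 1)) with ⟨e4, f4⟩ | ⟨e4, f4⟩ <;>
  rcases abs_cases (2 * (p + q - 1) - 1) with ⟨e5, f5⟩ | ⟨e5, f5⟩ <;>
  rcases abs_cases (2 * (p - q + 1) - 1) with ⟨e6, f6⟩ | ⟨e6, f6⟩ <;>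
  split_ifs <;> linarith

private lemma key (p q : ℝ) (hp0 : 0 ≤ p) (hp1 : p < 1) (hq0 : 0 ≤ q) (hq1 : q < 1) :
    -(2 * (2 * |2 * Int.fract (p + q) - 1| - 1)) +
      2 * f (2 * (2 * |2 * p - 1| - 1)) (2 * (2 * |2 * q - 1| - 1)) =
      2 * (2 * |2 * Int.fract (p - q) - 1| - 1) := by
  rcases lt_or_ge (p + q) 1 with hs | hs <;> rcases le_or_gt q p with hd | hd
  · rw [Int.fract_eq_self.mpr ⟨by linarith, hs⟩,
      Int.fract_eq_self.mpr ⟨by linarith, by linarith⟩]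
    exact keyA p q hp1 hq0 hs hd
  · rw [Int.fract_eq_self.mpr ⟨by linarith, hs⟩,
      show Int.fract (p - q) = Int.fract (p - q + 1) by
        rw [← Int.fract_add_intCast (p - q) (1 : ℤ)]; norm_num,
      Int.fract_eq_self.mpr ⟨by linarith, by linarith⟩]
    exact keyC p q hp0 hq1 hs hd
  · rw [show Int.fract (p + q) = Int.fract (p + q - 1) by
        rw [← Int.fract_sub_intCast (p + q) (1 : ℤ)]; norm_num,
      Int.fract_eq_self.mpr ⟨by linarith, by linarith⟩,
      Int.fract_eq_self.mpr ⟨by linarith, by linarith⟩]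
    exact keyB p q hp1 hq0 hs hd
  · rw [show Int.fract (p + q) = Int.fract (p + q - 1) by
        rw [← Int.fract_sub_intCast (p + q) (1 : ℤ)]; norm_num,
      Int.fract_eq_self.mpr ⟨by linarith, by linarith⟩,
      show Int.fract (p - q) = Int.fract (p - q + 1) by
        rw [← Int.fract_add_intCast (p - q) (1 : ℤ)]; norm_num,
      Int.fract_eq_self.mpr ⟨by linarith, by linarith⟩]
    exact keyD p q hp0 hq1 hs hd

theorem involution_on_param (φ ψ : ℝ) :
    -(2 * cosT (φ+ψ)) + 2 * f (2 * cosT φ) (2 * cosT ψ) = 2 * cosT (φ-ψ) := by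
  have h1 : Int.fract ((φ + ψ) / 2) = Int.fract (Int.fract (φ/2) + Int.fract (ψ/2)) := by
    rw [show (φ + ψ) / 2 = ((⌊φ/2⌋ + ⌊ψ/2⌋ : ℤ) : ℝ) + (Int.fract (φ/2) + Int.fract (ψ/2)) by
      unfold Int.fract; push_cast; ring, Int.fract_intCast_add]
  have h2 : Int.fract ((φ - ψ) / 2) = Int.fract (Int.fract (φ/2) - Int.fract (ψ/2)) := by
    rw [show (φ - ψ) / 2 = ((⌊φ/2⌋ - ⌊ψ/2⌋ : ℤ) : ℝ) + (Int.fract (φ/2) - Int.fract (ψ/2)) by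
      unfold Int.fract; push_cast; ring, Int.fract_intCast_add]
  simp only [cosT, h1, h2]
  exact key _ _ (Int.fract_nonneg _) (Int.fract_lt_one _) (Int.fract_nonneg _) (Int.fract_lt_one _)
end

section
/- For all real φ, ψ: cos_T(φ+ψ) + cos_T(φ−ψ) = 2 f(cos_T φ, cos_T ψ), where f(u,v) = v if u ≥ |v|, f(u,v) = u if v ≥ |u|, f(u,v) = −v if −u ≥ |v|, f(u,v) = −u if −v ≥ |u|. -/
set_option maxHeartbeats 4000000 in
lemma key_s15 (u v : ℝ) (hu0 : 0 ≤ u) (hu1 : u < 1) (hv0 : 0 ≤ v) (hv1 : v < 1) :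
    2 * |2 * Int.fract (u+v) - 1| - 1 + (2 * |2 * Int.fract (u-v) - 1| - 1)
      = 2 * f (2 * |2*u-1| - 1) (2 * |2*v-1| - 1) := by
  have hS : ∀ w : ℝ, 0 ≤ w → w < 1 → Int.fract w = w := fun w h h' => Int.fract_eq_self.mpr ⟨h, h'⟩
  have hs : Int.fract (u+v) = if u + v < 1 then u + v else u + v - 1 := by
    split_ifs with h
    · exact hS _ (by linarith) h
    · have h2 : Int.fract (u+v) = Int.fract (u+v-1) :=
        Int.fract_eq_fract.mpr ⟨1, by push_cast; ring⟩
      rw [h2]; exact hS _ (by linarith) (by linarith)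
  have hd : Int.fract (u-v) = if v ≤ u then u - v else u - v + 1 := by
    split_ifs with h
    · exact hS _ (by linarith) (by linarith)
    · have h2 : Int.fract (u-v) = Int.fract (u-v+1) :=
        Int.fract_eq_fract.mpr ⟨-1, by push_cast; ring⟩
      rw [h2]; exact hS _ (by linarith) (by linarith)
  rw [hs, hd]
  unfold f
  rcases lt_or_ge (u+v) 1 with hP | hP
  · rcases le_or_gt v u with hQ | hQ
    · rw [if_pos hP, if_pos hQ]
      rcases abs_cases (2*u-1) with ⟨e1,l1⟩|⟨e1,l1⟩ <;>
      rcases abs_cases (2*v-1) with ⟨e2,l2⟩|⟨e2,l2⟩ <;>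
      simp only [e1, e2] <;>
      rcases abs_cases (2*(2*u-1)-1) with ⟨e3,l3⟩|⟨e3,l3⟩ <;>
      rcases abs_cases (2*(-(2*u-1))-1) with ⟨e4,l4⟩|⟨e4,l4⟩ <;>
      rcases abs_cases (2*(2*v-1)-1) with ⟨e5,l5⟩|⟨e5,l5⟩ <;>
      rcases abs_cases (2*(-(2*v-1))-1) with ⟨e6,l6⟩|⟨e6,l6⟩ <;>
      simp only [e3,e4,e5,e6] <;>
      split_ifs <;>
      first
      | linarith
      | (rcases abs_cases (2*(u+v)-1) with ⟨g1,m1⟩|⟨g1,m1⟩ <;>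
         rcases abs_cases (2*(u-v)-1) with ⟨g3,m3⟩|⟨g3,m3⟩ <;>
         simp only [g1,g3] <;> linarith)
    · rw [if_pos hP, if_neg (not_le.mpr hQ)]
      rcases abs_cases (2*u-1) with ⟨e1,l1⟩|⟨e1,l1⟩ <;>
      rcases abs_cases (2*v-1) with ⟨e2,l2⟩|⟨e2,l2⟩ <;>
      simp only [e1, e2] <;>
      rcases abs_cases (2*(2*u-1)-1) with ⟨e3,l3⟩|⟨e3,l3⟩ <;>
      rcases abs_cases (2*(-(2*u-1))-1) with ⟨e4,l4⟩|⟨e4,l4⟩ <;>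
      rcases abs_cases (2*(2*v-1)-1) with ⟨e5,l5⟩|⟨e5,l5⟩ <;>
      rcases abs_cases (2*(-(2*v-1))-1) with ⟨e6,l6⟩|⟨e6,l6⟩ <;>
      simp only [e3,e4,e5,e6] <;>
      split_ifs <;>
      first
      | linarith
      | (rcases abs_cases (2*(u+v)-1) with ⟨g1,m1⟩|⟨g1,m1⟩ <;>
         rcases abs_cases (2*(u-v+1)-1) with ⟨g3,m3⟩|⟨g3,m3⟩ <;>
         simp only [g1,g3] <;> linarith)
  · rcases le_or_gt v u with hQ | hQ
    · rw [if_neg (not_lt.mpr hP), if_pos hQ]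
      rcases abs_cases (2*u-1) with ⟨e1,l1⟩|⟨e1,l1⟩ <;>
      rcases abs_cases (2*v-1) with ⟨e2,l2⟩|⟨e2,l2⟩ <;>
      simp only [e1, e2] <;>
      rcases abs_cases (2*(2*u-1)-1) with ⟨e3,l3⟩|⟨e3,l3⟩ <;>
      rcases abs_cases (2*(-(2*u-1))-1) with ⟨e4,l4⟩|⟨e4,l4⟩ <;>
      rcases abs_cases (2*(2*v-1)-1) with ⟨e5,l5⟩|⟨e5,l5⟩ <;>
      rcases abs_cases (2*(-(2*v-1))-1) with ⟨e6,l6⟩|⟨e6,l6⟩ <;>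
      simp only [e3,e4,e5,e6] <;>
      split_ifs <;>
      first
      | linarith
      | (rcases abs_cases (2*(u+v-1)-1) with ⟨g1,m1⟩|⟨g1,m1⟩ <;>
         rcases abs_cases (2*(u-v)-1) with ⟨g3,m3⟩|⟨g3,m3⟩ <;>
         simp only [g1,g3] <;> linarith)
    · rw [if_neg (not_lt.mpr hP), if_neg (not_le.mpr hQ)]
      rcases abs_cases (2*u-1) with ⟨e1,l1⟩|⟨e1,l1⟩ <;>
      rcases abs_cases (2*v-1) with ⟨e2,l2⟩|⟨e2,l2⟩ <;>
      simp only [e1, e2] <;>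
      rcases abs_cases (2*(2*u-1)-1) with ⟨e3,l3⟩|⟨e3,l3⟩ <;>
      rcases abs_cases (2*(-(2*u-1))-1) with ⟨e4,l4⟩|⟨e4,l4⟩ <;>
      rcases abs_cases (2*(2*v-1)-1) with ⟨e5,l5⟩|⟨e5,l5⟩ <;>
      rcases abs_cases (2*(-(2*v-1))-1) with ⟨e6,l6⟩|⟨e6,l6⟩ <;>
      simp only [e3,e4,e5,e6] <;>
      split_ifs <;>
      first
      | linarith
      | (rcases abs_cases (2*(u+v-1)-1) with ⟨g1,m1⟩|⟨g1,m1⟩ <;>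
         rcases abs_cases (2*(u-v+1)-1) with ⟨g3,m3⟩|⟨g3,m3⟩ <;>
         simp only [g1,g3] <;> linarith)

theorem trop_sum_to_product (φ ψ : ℝ) :
    cosT (φ+ψ) + cosT (φ-ψ) = 2 * f (cosT φ) (cosT ψ) := by
  have e1 : Int.fract ((φ+ψ)/2) = Int.fract (Int.fract (φ/2) + Int.fract (ψ/2)) :=
    Int.fract_eq_fract.mpr ⟨⌊φ/2⌋ + ⌊ψ/2⌋, by simp only [Int.fract]; push_cast; ring⟩
  have e2 : Int.fract ((φ-ψ)/2) = Int.fract (Int.fract (φ/2) - Int.fract (ψ/2)) :=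
    Int.fract_eq_fract.mpr ⟨⌊φ/2⌋ - ⌊ψ/2⌋, by simp only [Int.fract]; push_cast; ring⟩
  unfold cosT
  rw [e1, e2]
  exact key_s15 _ _ (Int.fract_nonneg _) (Int.fract_lt_one _) (Int.fract_nonneg _) (Int.fract_lt_one _)
end

section
/- For every point (u, v, w) ∈ ℝ³ with max(−u−v−w, −u+v+w, u−v+w, u+v−w) = 2, there exist real φ, ψ such that u = 2cos_T φ, v = 2cos_T ψ, and w = 2cos_T(φ+ψ); i.e. the map (φ,ψ) ↦ (2cos_T φ, 2cos_T ψ, 2cos_T(φ+ψ)) from ℝ² surjects onto the tropical Cayley surface. -/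
lemma cosT_eval1 (x : ℝ) (h0 : 0 ≤ x) (h1 : x ≤ 1) : cosT x = 1 - 2*x := by
  unfold cosT
  rw [Int.fract_eq_self.mpr ⟨by linarith, by linarith⟩, abs_of_nonpos (by linarith)]
  ring

lemma cosT_add_one (x : ℝ) : cosT (x+1) = - cosT x := by
  unfold cosT
  have key : Int.fract ((x+1)/2) = Int.fract (Int.fract (x/2) + 1/2) := by
    rw [show (x+1)/2 = x/2 + 1/2 by ring]
    conv_lhs => rw [← Int.floor_add_fract (x/2)]
    rw [add_assoc, Int.fract_intCast_add]
  have ht0 := Int.fract_nonneg (x/2)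
  have ht1 := Int.fract_lt_one (x/2)
  set t := Int.fract (x/2) with hts
  rcases lt_or_ge t (1/2) with hc | hc
  · rw [key, Int.fract_eq_self.mpr ⟨by linarith, by linarith⟩,
      abs_of_nonneg (by linarith), abs_of_nonpos (by linarith)]
    ring
  · have h2 : Int.fract (t + 1/2) = t - 1/2 := by
      rw [show t + 1/2 = (t - 1/2) + (1:ℤ) by push_cast; ring, Int.fract_add_intCast,
        Int.fract_eq_self.mpr ⟨by linarith, by linarith⟩]
    rw [key, h2, abs_of_nonpos (by linarith), abs_of_nonneg (by linarith)]
    ring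

lemma cosT_eval2 (x : ℝ) (h0 : 1 ≤ x) (h1 : x ≤ 2) : cosT x = 2*x - 3 := by
  have := cosT_add_one (x-1)
  rw [sub_add_cancel, cosT_eval1 (x-1) (by linarith) (by linarith)] at this
  linarith

lemma core (u v w : ℝ) (hu1 : -2 ≤ u) (hu2 : u ≤ 2) (hv1 : -2 ≤ v) (hv2 : v ≤ 2)
    (hw : (0 ≤ u + v ∧ w = u + v - 2) ∨ (u + v ≤ 0 ∧ w = -u - v - 2)) :
    ∃ φ ψ : ℝ, u = 2 * cosT φ ∧ v = 2 * cosT ψ ∧ w = 2 * cosT (φ+ψ) := by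
  refine ⟨(2-u)/4, (2-v)/4, ?_, ?_, ?_⟩
  · rw [cosT_eval1 _ (by linarith) (by linarith)]; ring
  · rw [cosT_eval1 _ (by linarith) (by linarith)]; ring
  · rcases hw with ⟨hs, hw⟩ | ⟨hs, hw⟩
    · rw [cosT_eval1 ((2-u)/4 + (2-v)/4) (by linarith) (by linarith)]; rw [hw]; ring
    · rw [cosT_eval2 ((2-u)/4 + (2-v)/4) (by linarith) (by linarith)]; rw [hw]; ring

theorem surface_param_surjective (u v w : ℝ)
    (h : max (-u-v-w) (max (-u+v+w) (max (u-v+w) (u+v-w))) = 2) :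
    ∃ φ ψ : ℝ, u = 2 * cosT φ ∧ v = 2 * cosT ψ ∧ w = 2 * cosT (φ+ψ) := by
  have hA : -u-v-w ≤ 2 := h ▸ le_max_left _ _
  have hB : -u+v+w ≤ 2 := h ▸ le_trans (le_max_left _ _) (le_max_right _ _)
  have hC : u-v+w ≤ 2 := h ▸ le_trans (le_trans (le_max_left _ _) (le_max_right _ _)) (le_max_right _ _)
  have hD : u+v-w ≤ 2 := h ▸ le_trans (le_trans (le_max_right _ _) (le_max_right _ _)) (le_max_right _ _)
  have hcases : -u-v-w = 2 ∨ -u+v+w = 2 ∨ u-v+w = 2 ∨ u+v-w = 2 := by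
    rcases max_choice (-u-v-w) (max (-u+v+w) (max (u-v+w) (u+v-w))) with h1 | h1
    · left; rw [← h1, h]
    · rw [h1] at h
      rcases max_choice (-u+v+w) (max (u-v+w) (u+v-w)) with h2 | h2
      · right; left; rw [← h2, h]
      · rw [h2] at h
        rcases max_choice (u-v+w) (u+v-w) with h3 | h3
        · right; right; left; rw [← h3, h]
        · right; right; right; rw [← h3, h]
  rcases hcases with he | he | he | he
  · -- -u-v-w = 2 : w = -u-v-2
    exact core u v w (by linarith) (by linarith) (by linarith) (by linarith)
      (Or.inr ⟨by linarith, by linarith⟩)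
  · -- -u+v+w = 2 : flip u and w
    obtain ⟨φ, ψ, h1, h2, h3⟩ := core (-u) v (-w) (by linarith) (by linarith)
      (by linarith) (by linarith) (Or.inl ⟨by linarith, by linarith⟩)
    refine ⟨φ + 1, ψ, ?_, h2, ?_⟩
    · rw [cosT_add_one]; linarith
    · rw [show φ + 1 + ψ = (φ + ψ) + 1 by ring, cosT_add_one]; linarith
  · -- u-v+w = 2 : flip v and w
    obtain ⟨φ, ψ, h1, h2, h3⟩ := core u (-v) (-w) (by linarith) (by linarith)
      (by linarith) (by linarith) (Or.inl ⟨by linarith, by linarith⟩)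
    refine ⟨φ, ψ + 1, h1, ?_, ?_⟩
    · rw [cosT_add_one]; linarith
    · rw [show φ + (ψ + 1) = (φ + ψ) + 1 by ring, cosT_add_one]; linarith
  · -- u+v-w = 2 : w = u+v-2
    exact core u v w (by linarith) (by linarith) (by linarith) (by linarith)
      (Or.inl ⟨by linarith, by linarith⟩)
end
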